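/- arXiv:2211.01248 — 3 statements merged into one kernel-verified Lean document; each statement's English description precedes it below -/
import Mathlib

section
/- Exact completeness of the Krawtchouk hierarchy at level n (Theorem 1.2, pseudoprobability form): assume ℓ ≥ n. Then q^(k₀·ℓ) is the greatest element of the set {∑_S |S|^ℓ · p(S) : p feasible for the distance-constrained pseudoprobability program at level ℓ}; that is, every feasible p satisfies ∑_S |S|^ℓ · p(S) ≤ q^(k₀·ℓ), and some feasible p attains this value (so the optimum value of the LP equals A_q^Lin(n,d)^ℓ = q^(k₀·ℓ)). -/
/-!
Weak LP duality. Put `g U = q ^ ((k₀ - dim U) * ℓ) - 1` (truncated subtraction: `g U = 0` once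
`dim U ≥ k₀`) and let `λ` be its Möbius inversion from above, so that `∑_{U ≥ S} λ U = g S`.
Pairing `λ` with the constraints `∑_{S ≤ U} |S|^ℓ p S ≥ 0` yields `∑_S g S |S|^ℓ p S ≥ 0`, and
`g S |S|^ℓ = q^(k₀ℓ) - |S|^ℓ` on the support of `p`, where every `S` is a code of dimension at
most `k₀`; with `∑_S p S = 1` this is the upper bound. The weights are nonnegative by downward
induction: a subspace has at most `q^n ≤ q^ℓ` covers, and `g` drops by a factor of at least `q^ℓ`
from one dimension to the next. The point mass on an optimal code attains the bound.
-/

open Classical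

noncomputable section

/-- A subspace `C ≤ F^n` has minimum distance at least `d` if every nonzero
codeword has Hamming weight at least `d`. -/
def MinDistGe (n d : ℕ) (F : Type) [Field F] [Fintype F]
    (C : Submodule F (Fin n → F)) : Prop :=
  ∀ w ∈ C, w ≠ 0 → d ≤ hammingNorm w

/-- `k₀`: the maximum dimension of a subspace of `F^n` of minimum distance at
least `d`. -/
def kzero (n d : ℕ) (F : Type) [Field F] [Fintype F] : ℕ :=
  sSup {k : ℕ | ∃ C : Submodule F (Fin n → F), MinDistGe n d F C ∧ Module.finrank F C = k}

/-- Feasibility for the distance-constrained pseudoprobability program at level `ℓ`: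
normalization, distance constraints, Fourier constraints, and nonnegativity
constraints. -/
def PseudoFeasibleDist (n ℓ d : ℕ) (F : Type) [Field F] [Fintype F]
    (p : Submodule F (Fin n → F) → ℝ) : Prop :=
  (∑ S : Submodule F (Fin n → F), p S) = 1 ∧
  (∀ S : Submodule F (Fin n → F), (∃ w ∈ S, w ≠ 0 ∧ hammingNorm w ≤ d - 1) → p S = 0) ∧
  (∀ U : Submodule F (Fin n → F),
      0 ≤ ∑ S : Submodule F (Fin n → F),
        if S ≤ U then (Fintype.card S : ℝ) ^ ℓ * p S else 0) ∧
  (∀ U : Submodule F (Fin n → F),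
      0 ≤ ∑ S : Submodule F (Fin n → F), if U ≤ S then p S else 0)

open Finset

section UpperInversion

variable {α R : Type*} [PartialOrder α] [Fintype α]

def upperInversion [AddCommGroup R] (g : α → R) : α → R :=
  wellFounded_gt.fix fun x ih =>
    g x - ∑ y ∈ ({y | x < y} : Finset α).attach, ih y (mem_filter.mp y.2).2

theorem upperInversion_eq [AddCommGroup R] (g : α → R) (x : α) :
    upperInversion g x = g x - ∑ y with x < y, upperInversion g y := by
  rw [upperInversion, WellFounded.fix_eq]
  exact congrArg (g x - ·) (sum_attach _ _)

theorem sum_upperInversion_of_le [AddCommGroup R] (g : α → R) (x : α) :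
    ∑ y with x ≤ y, upperInversion g y = g x := by
  have hIci : filter (x ≤ ·) univ = insert x (filter (x < ·) univ) := by
    ext y; simp [le_iff_eq_or_lt, eq_comm]
  rw [hIci, sum_insert (by simp), upperInversion_eq]
  abel

theorem sum_upperInversion_mul_sum_le [CommRing R] (g f : α → R) :
    ∑ x, upperInversion g x * ∑ y with y ≤ x, f y = ∑ y, g y * f y := by
  simp_rw [mul_sum]
  rw [sum_comm' (t' := univ) (s' := fun y => {x | y ≤ x}) (by simp)]
  simp_rw [← sum_mul, sum_upperInversion_of_le]

theorem upperInversion_nonneg [AddCommGroup R] [PartialOrder R] [IsOrderedAddMonoid R]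
    {g : α → R} (hg : ∀ x, ∑ y with x ⋖ y, g y ≤ g x) (x : α) : 0 ≤ upperInversion g x := by
  induction x using WellFoundedGT.induction with
  | _ x ih =>
  rw [upperInversion_eq, sub_nonneg]
  calc ∑ y with x < y, upperInversion g y
      ≤ ∑ y with x < y, ∑ c with x ⋖ c ∧ c ≤ y, upperInversion g y := by
        refine sum_le_sum fun y hy => ?_
        obtain ⟨c, hxc, hcy⟩ := exists_covBy_le_of_lt (mem_filter.mp hy).2
        exact single_le_sum (f := fun _ => upperInversion g y) (a := c)
          (fun _ _ => ih y (mem_filter.mp hy).2) (by simp [hxc, hcy])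
    _ = ∑ c with x ⋖ c, ∑ y with c ≤ y, upperInversion g y :=
        sum_comm' fun y c => by
          simp only [mem_filter, mem_univ, true_and]
          exact ⟨fun ⟨_, hxc, hcy⟩ => ⟨hcy, hxc⟩, fun ⟨hcy, hxc⟩ => ⟨hxc.lt.trans_le hcy, hxc, hcy⟩⟩
    _ = ∑ c with x ⋖ c, g c := by simp_rw [sum_upperInversion_of_le]
    _ ≤ g x := hg x

end UpperInversion

theorem Submodule.card_filter_covBy_le {R M : Type*} [Ring R] [AddCommGroup M] [Module R M]
    [Fintype M] (U : Submodule R M) :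
    #{W | U ⋖ W} ≤ Fintype.card M := by
  calc #{W | U ⋖ W}
      ≤ #(univ.image fun x => span R {x} ⊔ U) := by
        refine card_le_card fun W hW => ?_
        have hUW : U ⋖ W := (mem_filter.mp hW).2
        obtain ⟨x, hxW, hxU⟩ := SetLike.exists_of_lt hUW.lt
        refine mem_image.mpr ⟨x, mem_univ _, ?_⟩
        refine (hUW.wcovBy.eq_or_eq le_sup_right (sup_le ?_ hUW.le)).resolve_left fun h => hxU ?_
        · exact (span_singleton_le_iff_mem x W).mpr hxW
        · exact h ▸ mem_sup_left (mem_span_singleton_self x)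
    _ ≤ Fintype.card M := card_image_le

theorem pow_sub_mul_sub_one_antitone {q : ℝ} (hq : 1 ≤ q) (k ℓ : ℕ) :
    Antitone fun m : ℕ => q ^ ((k - m) * ℓ) - 1 := fun a b hab => by
  dsimp only
  gcongr

theorem pow_mul_pow_sub_succ_sub_one_le {q : ℝ} (hq : 1 ≤ q) (k ℓ m : ℕ) :
    q ^ ℓ * (q ^ ((k - (m + 1)) * ℓ) - 1) ≤ q ^ ((k - m) * ℓ) - 1 := by
  rcases lt_or_ge m k with hm | hm
  · have hexp : (k - m) * ℓ = ℓ + (k - (m + 1)) * ℓ := by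
      rw [show k - m = k - (m + 1) + 1 by omega, add_mul, one_mul, add_comm]
    rw [hexp, pow_add, mul_sub, mul_one, sub_le_sub_iff_left]
    exact one_le_pow₀ hq
  · simp [Nat.sub_eq_zero_of_le hm, Nat.sub_eq_zero_of_le (hm.trans m.le_succ)]

theorem pow_mul_mul_pow_sub_sub_one (q : ℝ) {k m : ℕ} (hm : m ≤ k) (ℓ : ℕ) :
    q ^ (m * ℓ) * (q ^ ((k - m) * ℓ) - 1) = q ^ (k * ℓ) - q ^ (m * ℓ) := by
  rw [mul_sub, mul_one, ← pow_add, ← add_mul, Nat.add_sub_cancel' hm]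

theorem Submodule.sum_covBy_pow_sub_one_le {K V : Type*} [DivisionRing K] [Fintype K]
    [AddCommGroup V] [Module K V] [Fintype V] {ℓ : ℕ} (hℓ : Module.finrank K V ≤ ℓ) (k : ℕ)
    (U : Submodule K V) :
    ∑ W with U ⋖ W, ((Fintype.card K : ℝ) ^ ((k - Module.finrank K W) * ℓ) - 1) ≤
      (Fintype.card K : ℝ) ^ ((k - Module.finrank K U) * ℓ) - 1 := by
  have hcovers : (#{W | U ⋖ W} : ℝ) ≤ (Fintype.card K : ℝ) ^ ℓ := by
    have := (U.card_filter_covBy_le).trans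
      ((Module.card_eq_pow_finrank (K := K) (V := V)).trans_le
        (Nat.pow_le_pow_right Fintype.card_pos hℓ))
    exact_mod_cast this
  set q : ℝ := (Fintype.card K : ℝ)
  have hq : 1 ≤ q := Nat.one_le_cast.mpr Fintype.card_pos
  calc ∑ W with U ⋖ W, (q ^ ((k - Module.finrank K W) * ℓ) - 1)
      ≤ ∑ W with U ⋖ W, (q ^ ((k - (Module.finrank K U + 1)) * ℓ) - 1) :=
        sum_le_sum fun W hW => pow_sub_mul_sub_one_antitone hq k ℓ
          (finrank_lt_finrank_of_lt (mem_filter.mp hW).2.lt)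
    _ = #{W | U ⋖ W} * (q ^ ((k - (Module.finrank K U + 1)) * ℓ) - 1) := by
        rw [sum_const, nsmul_eq_mul]
    _ ≤ q ^ ℓ * (q ^ ((k - (Module.finrank K U + 1)) * ℓ) - 1) :=
        mul_le_mul_of_nonneg_right hcovers (sub_nonneg.mpr (one_le_pow₀ hq))
    _ ≤ q ^ ((k - Module.finrank K U) * ℓ) - 1 := pow_mul_pow_sub_succ_sub_one_le hq k ℓ _

section Codes

variable {n d ℓ : ℕ} {F : Type} [Field F] [Fintype F]

theorem bddAbove_finrank_minDistGe :
    BddAbove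
      {k : ℕ | ∃ C : Submodule F (Fin n → F), MinDistGe n d F C ∧ Module.finrank F C = k} := by
  refine ⟨n, ?_⟩
  rintro k ⟨C, -, rfl⟩
  simpa using C.finrank_le

theorem finrank_le_kzero {C : Submodule F (Fin n → F)} (hC : MinDistGe n d F C) :
    Module.finrank F C ≤ kzero n d F :=
  le_csSup bddAbove_finrank_minDistGe ⟨C, hC, rfl⟩

theorem exists_minDistGe_finrank_eq_kzero (n d : ℕ) (F : Type) [Field F] [Fintype F] :
    ∃ C : Submodule F (Fin n → F), MinDistGe n d F C ∧ Module.finrank F C = kzero n d F := by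
  refine Nat.sSup_mem ?_ bddAbove_finrank_minDistGe
  exact ⟨0, ⊥, fun w hw hw0 => absurd ((Submodule.mem_bot F).mp hw) hw0, finrank_bot F _⟩

theorem pseudoFeasibleDist_ite_eq {C : Submodule F (Fin n → F)} (hC : MinDistGe n d F C) :
    PseudoFeasibleDist n ℓ d F fun S => if S = C then 1 else 0 := by
  refine ⟨by simp, ?_, fun U => sum_nonneg fun S _ => ?_, fun U => sum_nonneg fun S _ => ?_⟩
  · rintro S ⟨w, hwS, hw0, hwt⟩
    refine if_neg ?_
    rintro rfl
    have := hC w hwS hw0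
    have := hammingNorm_pos_iff.mpr hw0
    omega
  all_goals split_ifs <;> positivity

theorem PseudoFeasibleDist.minDistGe_of_ne_zero {p : Submodule F (Fin n → F) → ℝ}
    (hp : PseudoFeasibleDist n ℓ d F p) {S : Submodule F (Fin n → F)} (hS : p S ≠ 0) :
    MinDistGe n d F S := fun w hwS hw0 => by
  by_contra! hlt
  exact hS (hp.2.1 S ⟨w, hwS, hw0, by omega⟩)

theorem PseudoFeasibleDist.sum_card_pow_mul_le (hnℓ : n ≤ ℓ) {p : Submodule F (Fin n → F) → ℝ}
    (hp : PseudoFeasibleDist n ℓ d F p) :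
    ∑ S : Submodule F (Fin n → F), (Fintype.card S : ℝ) ^ ℓ * p S ≤
      (Fintype.card F : ℝ) ^ (kzero n d F * ℓ) := by
  set q : ℝ := (Fintype.card F : ℝ)
  set k₀ := kzero n d F
  have hcode : ∀ S, p S ≠ 0 → Module.finrank F S ≤ k₀ := fun S hS =>
    finrank_le_kzero (hp.minDistGe_of_ne_zero hS)
  obtain ⟨hsum, -, hfourier, -⟩ := hp
  set g : Submodule F (Fin n → F) → ℝ := fun U => q ^ ((k₀ - Module.finrank F U) * ℓ) - 1
  have hweights : ∀ U, 0 ≤ upperInversion g U := upperInversion_nonneg fun U =>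
    Submodule.sum_covBy_pow_sub_one_le (by simpa using hnℓ) k₀ U
  have hterm : ∀ S, g S * ((Fintype.card S : ℝ) ^ ℓ * p S) =
      (q ^ (k₀ * ℓ) - (Fintype.card S : ℝ) ^ ℓ) * p S := by
    intro S
    by_cases hS : p S = 0
    · simp [hS]
    rw [Module.card_eq_pow_finrank (K := F), Nat.cast_pow, ← pow_mul, ← mul_assoc, mul_comm (g S),
      pow_mul_mul_pow_sub_sub_one q (hcode S hS)]
  have := calc
    0 ≤ ∑ U, upperInversion g U * ∑ S with S ≤ U, (Fintype.card S : ℝ) ^ ℓ * p S :=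
        sum_nonneg fun U _ => mul_nonneg (hweights U) (by rw [sum_filter]; exact hfourier U)
    _ = ∑ S : Submodule F (Fin n → F), (q ^ (k₀ * ℓ) - (Fintype.card S : ℝ) ^ ℓ) * p S := by
        rw [sum_upperInversion_mul_sum_le]; simp_rw [hterm]
    _ = q ^ (k₀ * ℓ) - ∑ S : Submodule F (Fin n → F), (Fintype.card S : ℝ) ^ ℓ * p S := by
        simp_rw [sub_mul, sum_sub_distrib, ← mul_sum, hsum, mul_one]
  linarith

end Codes

theorem kraw_exact_completeness_general
    (n ℓ d : ℕ) (hnl : n ≤ ℓ)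
    (F : Type) [Field F] [Fintype F] :
    IsGreatest
      {v : ℝ | ∃ p : Submodule F (Fin n → F) → ℝ, PseudoFeasibleDist n ℓ d F p ∧
        v = ∑ S : Submodule F (Fin n → F), (Fintype.card S : ℝ) ^ ℓ * p S}
      ((Fintype.card F : ℝ) ^ (kzero n d F * ℓ)) := by
  obtain ⟨C, hC, hCdim⟩ := exists_minDistGe_finrank_eq_kzero n d F
  refine ⟨⟨_, pseudoFeasibleDist_ite_eq hC, ?_⟩, ?_⟩
  · simp_rw [mul_ite, mul_one, mul_zero, sum_ite_eq', mem_univ, if_true]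
    rw [Module.card_eq_pow_finrank (K := F) (V := C), hCdim, Nat.cast_pow, pow_mul]
  · rintro v ⟨p, hp, rfl⟩
    exact hp.sum_card_pow_mul_le hnl

/-- **Exact completeness of the Krawtchouk hierarchy at level `n`
(Theorem 1.2, pseudoprobability form).** For `ℓ ≥ n`, the value `q^(k₀·ℓ)` is
the greatest element of the set of objective values `∑_S |S|^ℓ p S` over all
`p` feasible for the distance-constrained pseudoprobability program at level `ℓ`. -/
theorem kraw_exact_completeness
    (n ℓ d : ℕ) (hn : 1 ≤ n) (hd : 1 ≤ d) (hdn : d ≤ n) (hnl : n ≤ ℓ)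
    (F : Type) [Field F] [Fintype F] :
    IsGreatest
      {v : ℝ | ∃ p : Submodule F (Fin n → F) → ℝ, PseudoFeasibleDist n ℓ d F p ∧
        v = ∑ S : Submodule F (Fin n → F), (Fintype.card S : ℝ) ^ ℓ * p S}
      ((Fintype.card F : ℝ) ^ (kzero n d F * ℓ)) :=
  kraw_exact_completeness_general n ℓ d hnl F
end
end

section
/- Mass-transfer improvement lemma (key step of Theorem 3.6): assume ℓ ≥ n. Let p be feasible for the dimension-constrained pseudoprobability program at level ℓ, and suppose S_min is a subspace with p(S_min) ≠ 0, dim S_min < k₀, and dim S_min ≤ dim T for every subspace T with p(T) ≠ 0. Then there exists a feasible p₊ with ∑_S |S|^ℓ · p₊(S) > ∑_S |S|^ℓ · p(S); in particular p does not maximize the objective. -/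
open Classical

noncomputable section

/-- Feasibility for the dimension-constrained pseudoprobability program at level `ℓ`:
normalization, dimension constraints, Fourier constraints, and nonnegativity
constraints. -/
def PseudoFeasibleDim (n ℓ d : ℕ) (F : Type) [Field F] [Fintype F]
    (p : Submodule F (Fin n → F) → ℝ) : Prop :=
  (∑ S : Submodule F (Fin n → F), p S) = 1 ∧
  (∀ S : Submodule F (Fin n → F), kzero n d F < Module.finrank F S → p S = 0) ∧
  (∀ U : Submodule F (Fin n → F),
      0 ≤ ∑ S : Submodule F (Fin n → F),
        if S ≤ U then (Fintype.card S : ℝ) ^ ℓ * p S else 0) ∧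
  (∀ U : Submodule F (Fin n → F),
      0 ≤ ∑ S : Submodule F (Fin n → F), if U ≤ S then p S else 0)

/-!
Since `S_min` has minimal dimension in the support of `p`, the Fourier constraint at `S_min`
reads `|S_min|^ℓ p(S_min) ≥ 0`, so `c := p(S_min) > 0`. Move this mass uniformly onto the `K`
superspaces `T ⊇ S_min` of dimension `dim S_min + 1`. A linear constraint `∑ g p ≥ 0` then
changes by `c (avg_T g(T) - g(S_min))`, which is `≥ 0` for every upward constraint, and for the
Fourier constraint at every `U ≠ S_min`: if `U ⊋ S_min` it contains some `T`, and
`K < |F^n| ≤ q^ℓ = |T|^ℓ / |S_min|^ℓ` because every `T` is `S_min + F x` for some `x ∉ S_min`.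
At `U = S_min` the new Fourier sum is exactly `0`. The objective gains
`c |S_min|^ℓ (q^ℓ - 1) > 0`.
-/

open Finset

section Transfer

variable {α : Type*} [DecidableEq α]

def transferMass (p : α → ℝ) (s : α) (A : Finset α) : α → ℝ :=
  fun x => p x + p s * ((if x ∈ A then (#A : ℝ)⁻¹ else 0) - if x = s then 1 else 0)

theorem transferMass_of_ne_of_notMem {p : α → ℝ} {s x : α} {A : Finset α} (hxs : x ≠ s)
    (hxA : x ∉ A) : transferMass p s A x = p x := by
  simp [transferMass, hxs, hxA]

variable [Fintype α]

theorem sum_mul_transferMass (p g : α → ℝ) (s : α) (A : Finset α) :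
    ∑ x, g x * transferMass p s A x
      = ∑ x, g x * p x + p s * ((∑ x ∈ A, g x) / #A - g s) := by
  simp only [transferMass, mul_sub, mul_ite, mul_zero, mul_one, mul_add, sum_add_distrib,
    sum_sub_distrib, sum_ite_mem, univ_inter, sum_ite_eq', mem_univ, ↓reduceIte, div_eq_mul_inv,
    add_right_inj]
  rw [← sum_mul]
  ring

variable {p g : α → ℝ} {s : α} {A : Finset α}

theorem sum_transferMass (hA : A.Nonempty) : ∑ x, transferMass p s A x = ∑ x, p x := by
  have hA' : (#A : ℝ) ≠ 0 := by exact_mod_cast hA.card_pos.ne'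
  simpa [hA'] using sum_mul_transferMass p 1 s A

theorem sum_mul_transferMass_nonneg (hA : A.Nonempty) (hs : 0 ≤ p s)
    (hp : 0 ≤ ∑ x, g x * p x) (hg : g s * #A ≤ ∑ x ∈ A, g x) :
    0 ≤ ∑ x, g x * transferMass p s A x := by
  have hgap : 0 ≤ (∑ x ∈ A, g x) / #A - g s := by
    rwa [sub_nonneg, le_div_iff₀ (by exact_mod_cast hA.card_pos)]
  rw [sum_mul_transferMass]
  exact add_nonneg hp (mul_nonneg hs hgap)

theorem sum_mul_lt_sum_mul_transferMass (hA : A.Nonempty) (hs : 0 < p s)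
    (hg : g s * #A < ∑ x ∈ A, g x) :
    ∑ x, g x * p x < ∑ x, g x * transferMass p s A x := by
  have hgap : 0 < (∑ x ∈ A, g x) / #A - g s := by
    rwa [sub_pos, lt_div_iff₀ (by exact_mod_cast hA.card_pos)]
  rw [sum_mul_transferMass]
  exact lt_add_of_pos_right _ (mul_pos hs hgap)

end Transfer

section Superspaces

variable {F V : Type*} [Field F] [AddCommGroup V] [Module F V] [Fintype V]

def codimOneSuperspaces (S : Submodule F V) : Finset (Submodule F V) :=
  univ.filter fun T => S ≤ T ∧ Module.finrank F T = Module.finrank F S + 1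

variable {S T U : Submodule F V}

theorem mem_codimOneSuperspaces :
    T ∈ codimOneSuperspaces S ↔ S ≤ T ∧ Module.finrank F T = Module.finrank F S + 1 := by
  simp [codimOneSuperspaces]

theorem lt_of_mem_codimOneSuperspaces (hT : T ∈ codimOneSuperspaces S) : S < T := by
  obtain ⟨hST, hrank⟩ := mem_codimOneSuperspaces.mp hT
  exact lt_of_le_of_ne hST fun h => by subst h; omega

theorem sup_span_singleton_mem_codimOneSuperspaces {x : V} (hx : x ∉ S) :
    S ⊔ Submodule.span F {x} ∈ codimOneSuperspaces S :=
  mem_codimOneSuperspaces.mpr ⟨le_sup_left, Submodule.finrank_sup_span_singleton hx⟩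

theorem exists_mem_codimOneSuperspaces_le (h : S < U) : ∃ T ∈ codimOneSuperspaces S, T ≤ U := by
  obtain ⟨x, hxU, hxS⟩ := SetLike.exists_of_lt h
  exact ⟨_, sup_span_singleton_mem_codimOneSuperspaces hxS,
    sup_le h.le ((Submodule.span_singleton_le_iff_mem x U).mpr hxU)⟩

theorem codimOneSuperspaces_nonempty (h : S ≠ ⊤) : (codimOneSuperspaces S).Nonempty :=
  let ⟨T, hT, _⟩ := exists_mem_codimOneSuperspaces_le h.lt_top
  ⟨T, hT⟩

theorem card_eq_mul_of_mem_codimOneSuperspaces [Fintype F] (hT : T ∈ codimOneSuperspaces S) :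
    Fintype.card T = Fintype.card S * Fintype.card F := by
  rw [Module.card_eq_pow_finrank (K := F) (V := T), Module.card_eq_pow_finrank (K := F) (V := S),
    (mem_codimOneSuperspaces.mp hT).2, pow_succ]

theorem card_codimOneSuperspaces_lt : #(codimOneSuperspaces S) < Fintype.card V := by
  have hsurj : Set.SurjOn (fun x => S ⊔ Submodule.span F {x}) ↑(univ.filter (· ∉ S))
      ↑(codimOneSuperspaces S) := by
    intro T hT
    obtain ⟨x, hxT, hxS⟩ := SetLike.exists_of_lt (lt_of_mem_codimOneSuperspaces hT)
    obtain ⟨hST, hrank⟩ := mem_codimOneSuperspaces.mp hT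
    refine ⟨x, by simpa using hxS, Submodule.eq_of_le_of_finrank_le ?_ ?_⟩
    · exact sup_le hST ((Submodule.span_singleton_le_iff_mem x T).mpr hxT)
    · rw [hrank, Submodule.finrank_sup_span_singleton hxS]
  calc #(codimOneSuperspaces S) ≤ #(univ.filter (· ∉ S)) := card_le_card_of_surjOn _ hsurj
    _ < #(univ : Finset V) := card_lt_card (filter_ssubset.mpr ⟨0, mem_univ _, by simp⟩)
    _ = Fintype.card V := card_univ

end Superspaces

section SubspaceMeasures

variable {F V : Type*} [Field F] [AddCommGroup V] [Module F V] [Fintype V]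

def fourierSum (ℓ : ℕ) (p : Submodule F V → ℝ) (U : Submodule F V) : ℝ :=
  ∑ S, if S ≤ U then (Fintype.card S : ℝ) ^ ℓ * p S else 0

def upperSum (p : Submodule F V → ℝ) (U : Submodule F V) : ℝ :=
  ∑ S, if U ≤ S then p S else 0

variable {ℓ : ℕ} {p : Submodule F V → ℝ} {Smin U : Submodule F V}

theorem fourierSum_eq_sum_mul :
    fourierSum ℓ p U = ∑ S, (if S ≤ U then (Fintype.card S : ℝ) ^ ℓ else 0) * p S := by
  simp only [fourierSum, ite_zero_mul]

theorem upperSum_eq_sum_mul : upperSum p U = ∑ S, (if U ≤ S then (1 : ℝ) else 0) * p S := by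
  simp only [upperSum, ite_zero_mul, one_mul]

theorem fourierSum_eq_of_forall_finrank_le
    (hmin : ∀ T, p T ≠ 0 → Module.finrank F Smin ≤ Module.finrank F T) :
    fourierSum ℓ p Smin = (Fintype.card Smin : ℝ) ^ ℓ * p Smin := by
  rw [fourierSum, sum_eq_single Smin (fun S _ hS => ?_) (by simp), if_pos le_rfl]
  split_ifs with hle
  · have hrank := Submodule.finrank_lt_finrank_of_lt (lt_of_le_of_ne hle hS)
    rw [not_imp_comm.mp (hmin S) (by omega), mul_zero]
  · rfl

theorem pos_of_forall_finrank_le (hfour : 0 ≤ fourierSum ℓ p Smin) (hne : p Smin ≠ 0)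
    (hmin : ∀ T, p T ≠ 0 → Module.finrank F Smin ≤ Module.finrank F T) : 0 < p Smin := by
  rw [fourierSum_eq_of_forall_finrank_le hmin,
    mul_nonneg_iff_of_pos_left (by positivity)] at hfour
  exact hfour.lt_of_ne' hne

theorem fourierSum_transferMass_nonneg [Fintype F] (hA : (codimOneSuperspaces Smin).Nonempty)
    (hc : 0 ≤ p Smin) (hmin : ∀ T, p T ≠ 0 → Module.finrank F Smin ≤ Module.finrank F T)
    (hcard : (#(codimOneSuperspaces Smin) : ℝ) ≤ (Fintype.card F : ℝ) ^ ℓ)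
    (hU : 0 ≤ fourierSum ℓ p U) :
    0 ≤ fourierSum ℓ (transferMass p Smin (codimOneSuperspaces Smin)) U := by
  rw [fourierSum_eq_sum_mul] at hU ⊢
  by_cases hSU : Smin ≤ U
  · rcases hSU.eq_or_lt with rfl | hlt
    · rw [sum_mul_transferMass, ← fourierSum_eq_sum_mul, fourierSum_eq_of_forall_finrank_le hmin,
        sum_eq_zero fun T hT => if_neg (lt_of_mem_codimOneSuperspaces hT).not_ge, if_pos le_rfl]
      apply le_of_eq
      ring
    · obtain ⟨T, hT, hTU⟩ := exists_mem_codimOneSuperspaces_le hlt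
      refine sum_mul_transferMass_nonneg hA hc hU ?_
      calc (if Smin ≤ U then (Fintype.card Smin : ℝ) ^ ℓ else 0) * #(codimOneSuperspaces Smin)
          ≤ (Fintype.card Smin : ℝ) ^ ℓ * (Fintype.card F : ℝ) ^ ℓ := by
            rw [if_pos hSU]; gcongr
        _ = if T ≤ U then (Fintype.card T : ℝ) ^ ℓ else 0 := by
            rw [if_pos hTU, card_eq_mul_of_mem_codimOneSuperspaces hT]; push_cast; ring
        _ ≤ _ := single_le_sum (f := fun S => if S ≤ U then (Fintype.card S : ℝ) ^ ℓ else 0)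
            (fun _ _ => ite_nonneg (by positivity) le_rfl) hT
  · refine sum_mul_transferMass_nonneg hA hc hU ?_
    rw [if_neg hSU, zero_mul]
    exact sum_nonneg fun _ _ => ite_nonneg (by positivity) le_rfl

theorem upperSum_transferMass_nonneg (hA : (codimOneSuperspaces Smin).Nonempty)
    (hc : 0 ≤ p Smin) (hU : 0 ≤ upperSum p U) :
    0 ≤ upperSum (transferMass p Smin (codimOneSuperspaces Smin)) U := by
  rw [upperSum_eq_sum_mul] at hU ⊢
  refine sum_mul_transferMass_nonneg hA hc hU ?_
  by_cases hUS : U ≤ Smin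
  · rw [sum_congr rfl fun T hT => if_pos (hUS.trans (lt_of_mem_codimOneSuperspaces hT).le)]
    simp [hUS]
  · rw [if_neg hUS, zero_mul]
    exact sum_nonneg fun _ _ => ite_nonneg zero_le_one le_rfl

theorem sum_card_pow_mul_lt_transferMass [Fintype F] (hA : (codimOneSuperspaces Smin).Nonempty)
    (hc : 0 < p Smin) (hℓ : ℓ ≠ 0) :
    ∑ S : Submodule F V, (Fintype.card S : ℝ) ^ ℓ * p S
      < ∑ S : Submodule F V,
          (Fintype.card S : ℝ) ^ ℓ * transferMass p Smin (codimOneSuperspaces Smin) S := by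
  refine sum_mul_lt_sum_mul_transferMass hA hc ?_
  calc (Fintype.card Smin : ℝ) ^ ℓ * #(codimOneSuperspaces Smin)
      = ∑ _T ∈ codimOneSuperspaces Smin, (Fintype.card Smin : ℝ) ^ ℓ := by
        rw [sum_const, nsmul_eq_mul, mul_comm]
    _ < ∑ T ∈ codimOneSuperspaces Smin, (Fintype.card T : ℝ) ^ ℓ := by
        refine sum_lt_sum_of_nonempty hA fun T hT => pow_lt_pow_left₀ ?_ (by positivity) hℓ
        rw [card_eq_mul_of_mem_codimOneSuperspaces hT]
        exact_mod_cast lt_mul_of_one_lt_right Fintype.card_pos Fintype.one_lt_card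

end SubspaceMeasures

theorem kzero_le (n d : ℕ) (F : Type) [Field F] [Fintype F] : kzero n d F ≤ n :=
  csSup_le' fun _ ⟨C, _, hC⟩ => hC ▸ (Submodule.finrank_le C).trans (Module.finrank_fin_fun F).le

section FeasibleProgram

variable {n ℓ d : ℕ} {F : Type} [Field F] [Fintype F] {p : Submodule F (Fin n → F) → ℝ}
  {Smin : Submodule F (Fin n → F)}

theorem ne_top_of_finrank_lt_kzero (h : Module.finrank F Smin < kzero n d F) : Smin ≠ ⊤ := by
  rintro rfl
  rw [finrank_top, Module.finrank_fin_fun] at h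
  exact absurd (kzero_le n d F) (by omega)

theorem pseudoFeasibleDim_transferMass (hfeas : PseudoFeasibleDim n ℓ d F p)
    (hmin : ∀ T, p T ≠ 0 → Module.finrank F Smin ≤ Module.finrank F T)
    (hlt : Module.finrank F Smin < kzero n d F) (hnl : n ≤ ℓ)
    (hA : (codimOneSuperspaces Smin).Nonempty) (hc : 0 ≤ p Smin) :
    PseudoFeasibleDim n ℓ d F (transferMass p Smin (codimOneSuperspaces Smin)) := by
  obtain ⟨hsum, hdim, hfour, hupper⟩ := hfeas
  have hcard : (#(codimOneSuperspaces Smin) : ℝ) ≤ (Fintype.card F : ℝ) ^ ℓ := by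
    have h : #(codimOneSuperspaces Smin) < Fintype.card F ^ n := by
      simpa using card_codimOneSuperspaces_lt (S := Smin)
    exact_mod_cast h.le.trans (Nat.pow_le_pow_right Fintype.card_pos hnl)
  refine ⟨(sum_transferMass hA).trans hsum, fun S hS => ?_,
    fun U => fourierSum_transferMass_nonneg hA hc hmin hcard (hfour U),
    fun U => upperSum_transferMass_nonneg hA hc (hupper U)⟩
  rw [transferMass_of_ne_of_notMem ?_ ?_, hdim S hS]
  · rintro rfl
    omega
  · rw [mem_codimOneSuperspaces]
    omega

end FeasibleProgram

theorem mass_transfer_improvement_general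
    (n ℓ d : ℕ) (hn : 1 ≤ n) (hnl : n ≤ ℓ)
    (F : Type) [Field F] [Fintype F]
    (p : Submodule F (Fin n → F) → ℝ)
    (hfeas : PseudoFeasibleDim n ℓ d F p)
    (Smin : Submodule F (Fin n → F))
    (hne : p Smin ≠ 0)
    (hlt : Module.finrank F Smin < kzero n d F)
    (hmin : ∀ T : Submodule F (Fin n → F), p T ≠ 0 →
      Module.finrank F Smin ≤ Module.finrank F T) :
    ∃ pplus : Submodule F (Fin n → F) → ℝ, PseudoFeasibleDim n ℓ d F pplus ∧
      (∑ S : Submodule F (Fin n → F), (Fintype.card S : ℝ) ^ ℓ * p S)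
        < ∑ S : Submodule F (Fin n → F), (Fintype.card S : ℝ) ^ ℓ * pplus S := by
  have hc : 0 < p Smin := pos_of_forall_finrank_le (hfeas.2.2.1 Smin) hne hmin
  have hA := codimOneSuperspaces_nonempty (ne_top_of_finrank_lt_kzero hlt)
  exact ⟨_, pseudoFeasibleDim_transferMass hfeas hmin hlt hnl hA hc.le,
    sum_card_pow_mul_lt_transferMass hA hc (by omega)⟩

/-- **Mass-transfer improvement lemma (key step of Theorem 3.6).**
For `ℓ ≥ n`, if `p` is feasible for the dimension-constrained pseudoprobability
program and `S_min` is a subspace of minimum dimension in the support of `p`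
with `dim S_min < k₀`, then some feasible `p₊` has strictly larger objective
value; in particular `p` is not a maximizer. -/
theorem mass_transfer_improvement
    (n ℓ d : ℕ) (hn : 1 ≤ n) (hd : 1 ≤ d) (hdn : d ≤ n) (hnl : n ≤ ℓ)
    (F : Type) [Field F] [Fintype F]
    (p : Submodule F (Fin n → F) → ℝ)
    (hfeas : PseudoFeasibleDim n ℓ d F p)
    (Smin : Submodule F (Fin n → F))
    (hne : p Smin ≠ 0)
    (hlt : Module.finrank F Smin < kzero n d F)
    (hmin : ∀ T : Submodule F (Fin n → F), p T ≠ 0 →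
      Module.finrank F Smin ≤ Module.finrank F T) :
    ∃ pplus : Submodule F (Fin n → F) → ℝ, PseudoFeasibleDim n ℓ d F pplus ∧
      (∑ S : Submodule F (Fin n → F), (Fintype.card S : ℝ) ^ ℓ * p S)
        < ∑ S : Submodule F (Fin n → F), (Fintype.card S : ℝ) ^ ℓ * pplus S :=
  mass_transfer_improvement_general n ℓ d hn hnl F p hfeas Smin hne hlt hmin
end
end

section
/- Equivalence of partial Fourier constraints (Lemma 4.2): let p be a function from the subspaces of F^n to ℝ and define a : (F^n)^ℓ → ℝ by a(x) := ∑_{T : Span(x) ≤ T} p(T). Then the following are equivalent: (i) for every subset I ⊆ Fin ℓ and every α ∈ (F^n)^ℓ, the complex number ∑_{x ∈ (F^n)^ℓ} a(x)·θ^I_α(x) is a nonnegative real; (ii) for all subspaces T ≤ U of F^n and every natural number r with n − dim U ≤ r ≤ ℓ and dim T ≤ ℓ − r, one has ∑_{S : T ≤ S ≤ U} |S|^r · p(S) ≥ 0. -/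
/-!
Expanding `a` and swapping the sums, `∑ₓ a(x) θ^I_α(x) = ∑_S p(S) ∑_{x ∈ S^ℓ} θ^I_α(x)`, and the
inner sum factors over the coordinates. A coordinate `i ∉ I` contributes `1[α_i ∈ S]`; a
coordinate `i ∈ I` contributes the character sum `∑_{v ∈ S} ψ⟨α_i, v⟩`, which is `|S|` if
`α_i ⊥ S` and `0` otherwise. Hence the Fourier coefficient is the real number
`∑_{T ≤ S ≤ U} |S|^{|I|} p(S)` with `T = Span(α_i : i ∉ I)` and `U = Span(α_i : i ∈ I)^⊥`, and
the dimension constraints in (ii) describe exactly the triples `(T, U, r)` with `T ≤ U` that arise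
this way (for `T ≰ U` the sum is empty), since every `U` is the orthogonal of its orthogonal.
-/

open Classical Finset

section CharacterSums

variable {F V : Type*} [Field F] [AddCommGroup V] [Module F V] [Fintype V]

theorem AddChar.sum_comp_linearMap (ψ : AddChar F ℂ) (hψ : ψ ≠ 1) (f : V →ₗ[F] F) :
    ∑ v, ψ (f v) = if f = 0 then (Fintype.card V : ℂ) else 0 := by
  split_ifs with hf
  · simp [hf]
  refine AddChar.sum_eq_zero_of_ne_one (ψ := ψ.compAddMonoidHom f.toAddMonoidHom) fun h ↦ hψ ?_
  exact AddChar.compAddMonoidHom_injective_left _ (LinearMap.surjective_of_ne_zero hf)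
    (h.trans (AddChar.ext _ _ fun _ ↦ rfl))

theorem AddChar.sum_ite_mem_comp_linearMap (ψ : AddChar F ℂ) (hψ : ψ ≠ 1) (f : V →ₗ[F] F)
    (S : Submodule F V) [DecidablePred (· ∈ S)] :
    ∑ v, (if v ∈ S then ψ (f v) else 0) =
      if ∀ v ∈ S, f v = 0 then (Fintype.card S : ℂ) else 0 := by
  rw [← sum_filter, sum_subtype _ (p := (· ∈ S)) fun v ↦ by simp]
  simpa [LinearMap.ext_iff] using ψ.sum_comp_linearMap hψ (f.domRestrict S)

end CharacterSums

section Spans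

variable {F V ι : Type*} [Field F] [AddCommGroup V] [Module F V]

namespace Submodule

theorem span_image_le_iff (S : Submodule F V) (α : ι → V) (s : Set ι) :
    span F (α '' s) ≤ S ↔ ∀ i ∈ s, α i ∈ S := by
  rw [span_le, Set.image_subset_iff]
  rfl

variable (F) in
theorem finrank_span_image_le_card (α : ι → V) (s : Finset ι) :
    Module.finrank F (span F (α '' s)) ≤ #s := by
  rw [← coe_image]
  exact (finrank_span_finset_le_card _).trans card_image_le

theorem exists_span_image_eq [FiniteDimensional F V] (S : Submodule F V) (s : Finset ι)
    (h : Module.finrank F S ≤ #s) : ∃ g : ι → V, span F (g '' s) = S := by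
  obtain ⟨f, hfS, hf, -⟩ := exists_fun_fin_finrank_span_eq F (S : Set V)
  replace h : Module.finrank F (span F (S : Set V)) ≤ #s := by rwa [span_eq]
  replace hf : span F (Set.range f) = S := hf.trans S.span_eq
  let e : Fin (Module.finrank F (span F (S : Set V))) ↪ ι :=
    (Fin.castLEEmb h).trans (s.equivFin.symm.toEmbedding.trans (Function.Embedding.subtype _))
  have he : ∀ j, e j ∈ s := fun j ↦ (s.equivFin.symm _).2
  refine ⟨Function.extend e f 0, le_antisymm ?_ (hf.ge.trans (span_mono ?_))⟩
  · rw [span_le]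
    rintro _ ⟨i, -, rfl⟩
    by_cases hi : ∃ j, e j = i
    · obtain ⟨j, rfl⟩ := hi
      rw [e.injective.extend_apply]
      exact hfS j
    · rw [Function.extend_apply' _ _ _ hi]
      exact S.zero_mem
  · rintro _ ⟨j, rfl⟩
    exact ⟨e j, he j, e.injective.extend_apply _ _ _⟩

theorem exists_span_image_eq_and_span_image_compl_eq [FiniteDimensional F V] [DecidableEq ι]
    [Fintype ι] (W T : Submodule F V) (I : Finset ι) (hW : Module.finrank F W ≤ #I)
    (hT : Module.finrank F T ≤ #Iᶜ) :
    ∃ α : ι → V, span F (α '' I) = W ∧ span F (α '' (↑I)ᶜ) = T := by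
  obtain ⟨g, hg⟩ := W.exists_span_image_eq I hW
  obtain ⟨h, hh⟩ := T.exists_span_image_eq Iᶜ hT
  refine ⟨fun i ↦ if i ∈ I then g i else h i, ?_, ?_⟩
  · rwa [Set.EqOn.image_eq fun i hi ↦ if_pos (mem_coe.mp hi)]
  · rw [← coe_compl]
    rwa [Set.EqOn.image_eq fun i hi ↦ if_neg (mem_compl.mp (mem_coe.mp hi))]

end Submodule

theorem LinearMap.BilinForm.le_orthogonal_span_image_iff (B : LinearMap.BilinForm F V)
    (S : Submodule F V) (α : ι → V) (s : Set ι) :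
    S ≤ B.orthogonal (Submodule.span F (α '' s)) ↔ ∀ i ∈ s, ∀ v ∈ S, B (α i) v = 0 := by
  refine ⟨fun h i hi v hv ↦ h hv (α i) (Submodule.subset_span ⟨i, hi, rfl⟩), fun h v hv ↦ ?_⟩
  have : Submodule.span F (α '' s) ≤ LinearMap.ker (B.flip v) := by
    rw [Submodule.span_le, Set.image_subset_iff]
    exact fun i hi ↦ h i hi v hv
  exact fun w hw ↦ this hw

end Spans

section DotProduct

variable {R m : Type*} [CommRing R] [Fintype m]

theorem dotProductBilin_isRefl :
    LinearMap.BilinForm.IsRefl (dotProductBilin R R : LinearMap.BilinForm R (m → R)) :=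
  fun u v h ↦ by rwa [dotProductBilin_apply_apply, dotProduct_comm] at h

theorem dotProductBilin_nondegenerate :
    LinearMap.BilinForm.Nondegenerate (dotProductBilin R R : LinearMap.BilinForm R (m → R)) :=
  ⟨fun v h ↦ dotProduct_eq_zero v h,
    fun w h ↦ dotProduct_eq_zero w fun v ↦ by rw [dotProduct_comm]; exact h v⟩

end DotProduct

section PartialFourier

variable {F V ι : Type*} [Field F] [AddCommGroup V] [Module F V] [Fintype V] [Fintype ι]

noncomputable def intervalMoment (p : Submodule F V → ℝ) (T U : Submodule F V) (r : ℕ) : ℝ :=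
  ∑ S : Submodule F V, if T ≤ S ∧ S ≤ U then (Fintype.card S : ℝ) ^ r * p S else 0

theorem intervalMoment_eq_zero_of_not_le (p : Submodule F V → ℝ) {T U : Submodule F V}
    (h : ¬T ≤ U) (r : ℕ) : intervalMoment p T U r = 0 :=
  sum_eq_zero fun _ _ ↦ if_neg fun hS ↦ h (hS.1.trans hS.2)

variable [DecidableEq ι]

theorem forall_intervalMoment_nonneg_iff {B : LinearMap.BilinForm F V} (hB : B.Nondegenerate)
    (hB' : B.IsRefl) (p : Submodule F V → ℝ) :
    (∀ (I : Finset ι) (α : ι → V), 0 ≤ intervalMoment p (Submodule.span F (α '' (↑I)ᶜ))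
        (B.orthogonal (Submodule.span F (α '' I))) #I) ↔
      ∀ T U : Submodule F V, T ≤ U → ∀ r : ℕ, Module.finrank F V - Module.finrank F U ≤ r →
        r ≤ Fintype.card ι → Module.finrank F T ≤ Fintype.card ι - r →
        0 ≤ intervalMoment p T U r := by
  constructor
  · intro h T U _ r hU hr hT
    obtain ⟨I, -, rfl⟩ := exists_subset_card_eq (s := (univ : Finset ι)) hr
    obtain ⟨α, hαI, hαIc⟩ := Submodule.exists_span_image_eq_and_span_image_compl_eq
      (B.orthogonal U) T I (by rwa [B.finrank_orthogonal hB]) (by rwa [card_compl])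
    simpa only [hαI, hαIc, B.orthogonal_orthogonal hB hB'] using h I α
  · intro h I α
    by_cases hTU : Submodule.span F (α '' (↑I)ᶜ) ≤ B.orthogonal (Submodule.span F (α '' I))
    · refine h _ _ hTU #I ?_ (card_le_univ I) ?_
      · have := Submodule.finrank_span_image_le_card F α I
        have := Submodule.finrank_le (Submodule.span F (α '' I))
        rw [B.finrank_orthogonal hB]
        omega
      · rw [← card_compl, ← coe_compl]
        exact Submodule.finrank_span_image_le_card F α Iᶜ
    · rw [intervalMoment_eq_zero_of_not_le p hTU]

variable [DecidableEq V]

/-- The function `θ^I_α`, with `⟨·, ·⟩` replaced by an arbitrary bilinear form `B`. -/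
noncomputable def partialChar (ψ : AddChar F ℂ) (B : LinearMap.BilinForm F V) (I : Finset ι)
    (α x : ι → V) : ℂ :=
  (∏ i ∈ I, ψ (B (α i) (x i))) * ∏ i ∈ Iᶜ, if x i = α i then 1 else 0

theorem sum_ite_forall_mem_mul_partialChar (ψ : AddChar F ℂ) (hψ : ψ ≠ 1)
    (B : LinearMap.BilinForm F V) (S : Submodule F V) (I : Finset ι) (α : ι → V) :
    ∑ x : ι → V, (if ∀ i, x i ∈ S then (1 : ℂ) else 0) * partialChar ψ B I α x =
      if Submodule.span F (α '' (↑I)ᶜ) ≤ S ∧ S ≤ B.orthogonal (Submodule.span F (α '' I))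
      then (Fintype.card S : ℂ) ^ #I else 0 := by
  set θ : ι → V → ℂ := fun i v ↦ (if v ∈ S then 1 else 0) *
    if i ∈ I then ψ (B (α i) v) else if v = α i then 1 else 0
  have hfactor : ∀ x : ι → V,
      (if ∀ i, x i ∈ S then (1 : ℂ) else 0) * partialChar ψ B I α x = ∏ i, θ i (x i) :=
    fun x ↦ by
      simp only [θ, partialChar]
      rw [prod_mul_distrib, Fintype.prod_boole, prod_ite (s := univ), filter_mem_eq_inter,
        univ_inter, filter_not, filter_mem_eq_inter, univ_inter, compl_eq_univ_sdiff]
  have hsum_mem : ∀ i ∈ I, ∑ v, θ i v =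
      if ∀ v ∈ S, B (α i) v = 0 then (Fintype.card S : ℂ) else 0 := fun i hi ↦ by
    simp only [θ, if_pos hi, ite_mul, one_mul, zero_mul]
    exact ψ.sum_ite_mem_comp_linearMap hψ (B (α i)) S
  have hsum_not_mem : ∀ i ∈ Iᶜ, ∑ v, θ i v = if α i ∈ S then 1 else 0 := fun i hi ↦ by
    rw [Fintype.sum_eq_single (α i) fun v hv ↦ by simp [θ, mem_compl.mp hi, hv]]
    simp [θ, mem_compl.mp hi]
  simp_rw [hfactor]
  rw [← Fintype.prod_sum, ← prod_mul_prod_compl I, prod_congr rfl hsum_mem,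
    prod_congr rfl hsum_not_mem, prod_ite_zero, prod_const, prod_boole, ite_zero_mul_ite_zero,
    mul_one]
  congr 1
  rw [B.le_orthogonal_span_image_iff, Submodule.span_image_le_iff, and_comm]
  simp only [Set.mem_compl_iff, mem_coe, mem_compl]

theorem sum_mul_partialChar_eq_intervalMoment (ψ : AddChar F ℂ) (hψ : ψ ≠ 1)
    (B : LinearMap.BilinForm F V) (p : Submodule F V → ℝ) (I : Finset ι) (α : ι → V) :
    ∑ x : ι → V, ((∑ T : Submodule F V,
        if Submodule.span F (Set.range x) ≤ T then p T else 0 : ℝ) : ℂ) * partialChar ψ B I α x =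
      intervalMoment p (Submodule.span F (α '' (↑I)ᶜ))
        (B.orthogonal (Submodule.span F (α '' I))) #I := by
  have hspan : ∀ (x : ι → V) (T : Submodule F V),
      Submodule.span F (Set.range x) ≤ T ↔ ∀ i, x i ∈ T := fun x T ↦ by
    rw [Submodule.span_le, Set.range_subset_iff]
    rfl
  calc _ = ∑ x : ι → V, ∑ T : Submodule F V,
        (p T : ℂ) * ((if ∀ i, x i ∈ T then 1 else 0) * partialChar ψ B I α x) := by
          refine sum_congr rfl fun x _ ↦ ?_
          push_cast
          rw [sum_mul]
          refine sum_congr rfl fun T _ ↦ ?_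
          simp only [hspan]
          split_ifs <;> push_cast <;> ring
    _ = ∑ T : Submodule F V, (p T : ℂ) * ∑ x : ι → V,
        (if ∀ i, x i ∈ T then 1 else 0) * partialChar ψ B I α x := by
          rw [sum_comm]
          simp_rw [mul_sum]
    _ = _ := by
          simp_rw [sum_ite_forall_mem_mul_partialChar ψ hψ]
          unfold intervalMoment
          push_cast
          refine sum_congr rfl fun S _ ↦ ?_
          split_ifs <;> push_cast <;> ring

end PartialFourier

theorem partial_fourier_constraints_equivalence_general
    (n ℓ : ℕ) (F : Type) [Field F] [Fintype F]
    (ψ : AddChar F ℂ) (hψ : ψ ≠ 1)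
    (p : Submodule F (Fin n → F) → ℝ)
    (a : (Fin ℓ → Fin n → F) → ℝ)
    (ha : ∀ x : Fin ℓ → Fin n → F,
      a x = ∑ T : Submodule F (Fin n → F),
        if Submodule.span F (Set.range x) ≤ T then p T else 0) :
    (∀ I : Finset (Fin ℓ), ∀ α : Fin ℓ → Fin n → F, ∃ c : ℝ, 0 ≤ c ∧
        (∑ x : Fin ℓ → Fin n → F, (a x : ℂ) *
          ((∏ i ∈ I, ψ (∑ k, α i k * x i k)) *
            ∏ i ∈ Iᶜ, if x i = α i then (1 : ℂ) else 0)) = (c : ℂ))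
      ↔
    (∀ T U : Submodule F (Fin n → F), T ≤ U → ∀ r : ℕ,
        n - Module.finrank F U ≤ r → r ≤ ℓ → Module.finrank F T ≤ ℓ - r →
        0 ≤ ∑ S : Submodule F (Fin n → F),
          if T ≤ S ∧ S ≤ U then (Fintype.card S : ℝ) ^ r * p S else 0) := by
  obtain rfl : a = _ := funext ha
  have key := forall_intervalMoment_nonneg_iff (ι := Fin ℓ) dotProductBilin_nondegenerate
    dotProductBilin_isRefl p
  rw [Module.finrank_fin_fun, Fintype.card_fin] at key
  refine Iff.trans (forall₂_congr fun I α ↦ ?_) key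
  have hsum := sum_mul_partialChar_eq_intervalMoment ψ hψ (dotProductBilin F F) p I α
  exact ⟨fun ⟨c, hc, h⟩ ↦ Complex.ofReal_inj.mp (hsum.symm.trans h) ▸ hc, fun h ↦ ⟨_, h, hsum⟩⟩

/-- **Equivalence of partial Fourier constraints (Lemma 4.2).**
With `a x := ∑_{T ≥ Span x} p T`, the following are equivalent:
(i) for every `I ⊆ Fin ℓ` and `α ∈ (F^n)^ℓ`, `∑_x a(x) θ^I_α(x)` is a
nonnegative real; (ii) for all subspaces `T ≤ U` and every `r` with
`n − dim U ≤ r ≤ ℓ` and `dim T ≤ ℓ − r`, `∑_{T ≤ S ≤ U} |S|^r p S ≥ 0`. -/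
theorem partial_fourier_constraints_equivalence
    (n ℓ : ℕ) (hn : 1 ≤ n) (hl : 1 ≤ ℓ) (F : Type) [Field F] [Fintype F]
    (ψ : AddChar F ℂ) (hψ : ψ ≠ 1)
    (p : Submodule F (Fin n → F) → ℝ)
    (a : (Fin ℓ → Fin n → F) → ℝ)
    (ha : ∀ x : Fin ℓ → Fin n → F,
      a x = ∑ T : Submodule F (Fin n → F),
        if Submodule.span F (Set.range x) ≤ T then p T else 0) :
    (∀ I : Finset (Fin ℓ), ∀ α : Fin ℓ → Fin n → F, ∃ c : ℝ, 0 ≤ c ∧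
        (∑ x : Fin ℓ → Fin n → F, (a x : ℂ) *
          ((∏ i ∈ I, ψ (∑ k, α i k * x i k)) *
            ∏ i ∈ Iᶜ, if x i = α i then (1 : ℂ) else 0)) = (c : ℂ))
      ↔
    (∀ T U : Submodule F (Fin n → F), T ≤ U → ∀ r : ℕ,
        n - Module.finrank F U ≤ r → r ≤ ℓ → Module.finrank F T ≤ ℓ - r →
        0 ≤ ∑ S : Submodule F (Fin n → F),
          if T ≤ S ∧ S ≤ U then (Fintype.card S : ℝ) ^ r * p S else 0) :=
  partial_fourier_constraints_equivalence_general n ℓ F ψ hψ p a ha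
end
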